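/- Let a and b be real numbers with b > 0, let α = a + i·b, and let z be a complex number with Im z > 0. Let w be a complex number with w ≠ 0 and w² = (z − α)(z − conj(α)). Define h_x = −w, h_t = −2(z + a)·w, h_{xz} = −(z − a)/w, and h_{tz} = −2(z² − a²)/w − 2w. Then the real number Im( conj(h_{xz}) · h_{tz} ) and the complex number Im(h_x)·h_{tz} − Im(h_t)·h_{xz} do not both vanish; equivalently, the real 3×2 matrix with rows (Re h_{xz}, Re h_{tz}), (Im h_{xz}, Im h_{tz}), (Im h_x, Im h_t) has rank 2. -/

import Mathlib

open Complex

/-!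
Write `ζ = z - a`, so `w² = ζ² + b²`. A direct computation gives
`Im(conj(h_{xz}) h_{tz}) = 2 Im z (2|ζ|² - b²) / |w|²`, so if it vanishes then `2|ζ|² = b²`.
On that circle `b² = 2 ζ conj ζ`, hence `w² = ζ c` with `c = ζ + 2 conj ζ = 3 Re ζ - i Im ζ`,
and the second quantity becomes `(2ζ / w) Im(c w)`. If it vanishes too, `c w` is real and
`ζ c³ = (c w)²` is the square of a real number; but `Im(ζ c³) = -8 Re ζ (Im ζ)³` forces
`Re ζ = 0`, and then `ζ c³ = -(Im ζ)⁴ < 0`.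
-/

theorem sub_mul_sub_conj_eq_sq_add_sq (z : ℂ) (a b : ℝ) :
    (z - (a + b * I)) * (z - starRingEnd ℂ (a + b * I)) = (z - a) ^ 2 + b ^ 2 := by
  simp only [map_add, map_mul, conj_ofReal, conj_I]
  linear_combination (-(b : ℂ) ^ 2) * I_sq

theorem im_conj_mul_two_mul_sq_add (ζ : ℂ) (a b : ℝ) :
    (starRingEnd ℂ ζ * (2 * ζ ^ 2 + 2 * a * ζ + b ^ 2)).im =
      ζ.im * (2 * normSq ζ - b ^ 2) := by
  simp only [normSq_apply, mul_im, mul_re, add_re, add_im, conj_re, conj_im, pow_two, ofReal_re,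
    ofReal_im, re_ofNat, im_ofNat]
  ring

theorem im_conj_hxz_mul_htz {z w : ℂ} {a b : ℝ} (hw : w ≠ 0)
    (hw2 : w ^ 2 = (z - a) ^ 2 + b ^ 2) :
    (starRingEnd ℂ (-(z - a) / w) * (-2 * (z ^ 2 - a ^ 2) / w - 2 * w)).im =
      2 * z.im * (2 * normSq (z - a) - b ^ 2) / normSq w := by
  have hcw : starRingEnd ℂ w ≠ 0 := (map_ne_zero _).2 hw
  have hprod : starRingEnd ℂ (-(z - a) / w) * (-2 * (z ^ 2 - a ^ 2) / w - 2 * w) =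
      2 * (starRingEnd ℂ (z - a) * (2 * (z - a) ^ 2 + 2 * a * (z - a) + b ^ 2)) /
        (normSq w : ℂ) := by
    rw [← mul_conj, map_div₀, map_neg]
    field_simp
    linear_combination starRingEnd ℂ (z - a) * hw2
  rw [hprod, div_ofReal_im, mul_im, im_conj_mul_two_mul_sq_add, re_ofNat, im_ofNat, zero_mul,
    add_zero, sub_im, ofReal_im, sub_zero]
  ring

theorem ofReal_sq_eq_two_mul_mul_conj {ζ : ℂ} {b : ℝ} (hcirc : 2 * normSq ζ = b ^ 2) :
    (b : ℂ) ^ 2 = 2 * ζ * starRingEnd ℂ ζ := by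
  rw [mul_assoc, mul_conj]; exact_mod_cast hcirc.symm

theorem sq_eq_mul_add_two_conj_of_circle {ζ w : ℂ} {b : ℝ} (hw2 : w ^ 2 = ζ ^ 2 + b ^ 2)
    (hcirc : 2 * normSq ζ = b ^ 2) : w ^ 2 = ζ * (ζ + 2 * starRingEnd ℂ ζ) := by
  linear_combination hw2 + ofReal_sq_eq_two_mul_mul_conj hcirc

theorem im_mul_add_two_conj_mul (ζ w : ℂ) :
    ((ζ + 2 * starRingEnd ℂ ζ) * w).im = 4 * ζ.re * w.im - (ζ * w).im := by
  simp only [mul_im, add_re, add_im, conj_re, conj_im, mul_re, re_ofNat, im_ofNat]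
  ring

theorem im_hx_mul_htz_sub_im_ht_mul_hxz_of_circle {z w : ℂ} {a b : ℝ} (hw : w ≠ 0)
    (hw2 : w ^ 2 = (z - a) ^ 2 + b ^ 2) (hcirc : 2 * normSq (z - a) = b ^ 2) :
    ((-w).im : ℂ) * (-2 * (z ^ 2 - a ^ 2) / w - 2 * w) -
        ((-2 * (z + a) * w).im : ℂ) * (-(z - a) / w) =
      2 * (z - a) / w * (((z - a + 2 * starRingEnd ℂ (z - a)) * w).im : ℂ) := by
  have him_ht : (-2 * (z + a) * w).im = -2 * (((z - a) * w).im + 2 * a * w.im) := by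
    simp only [neg_mul, neg_im, mul_im, mul_re, re_ofNat, im_ofNat, add_re, add_im, ofReal_re,
      ofReal_im, add_zero, zero_mul, sub_zero, sub_re, sub_im]
    ring
  have hb := ofReal_sq_eq_two_mul_mul_conj hcirc
  have hre : (z - a) + starRingEnd ℂ (z - a) = 2 * ((z - a).re : ℂ) := by
    rw [add_conj]; push_cast; ring
  rw [him_ht, im_mul_add_two_conj_mul, neg_im]
  field_simp
  push_cast
  linear_combination
    (2 * (w.im : ℂ)) * hw2 + (2 * (w.im : ℂ)) * hb + (4 * (w.im : ℂ) * (z - a)) * hre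

theorem mul_add_two_conj_pow_three_ne_sq {ζ : ℂ} (hζ : ζ.im ≠ 0) (r : ℝ) :
    ζ * (ζ + 2 * starRingEnd ℂ ζ) ^ 3 ≠ (r : ℂ) ^ 2 := by
  obtain ⟨s, v⟩ := ζ
  intro h
  have him := congrArg im h
  have hre := congrArg re h
  simp only [pow_succ, pow_zero, one_mul, mul_re, mul_im, add_re, add_im, conj_re, conj_im,
    ofReal_re, ofReal_im, re_ofNat, im_ofNat] at him hre hζ
  have hs : s = 0 := by
    have : s * v ^ 3 = 0 := by linear_combination (-1 / 8 : ℝ) * him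
    simpa [hζ] using this
  subst hs
  nlinarith [pow_pos (sq_pos_of_ne_zero hζ) 2, sq_nonneg r]

theorem genus_zero_rank_two_general (a b : ℝ) (z w : ℂ) (hz : 0 < z.im)
    (hw : w ≠ 0) (hw2 : w ^ 2 = (z - (a + b * I)) * (z - (starRingEnd ℂ) (a + b * I))) :
    ¬ ((((starRingEnd ℂ) (-(z - (a : ℂ)) / w)) *
          (-2 * (z ^ 2 - (a : ℂ) ^ 2) / w - 2 * w)).im = 0 ∧
       (((-w).im : ℂ)) * (-2 * (z ^ 2 - (a : ℂ) ^ 2) / w - 2 * w) -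
          (((-2 * (z + (a : ℂ)) * w).im : ℂ)) * (-(z - (a : ℂ)) / w) = 0) := by
  rintro ⟨hI, hD⟩
  rw [sub_mul_sub_conj_eq_sq_add_sq] at hw2
  have hζ : (z - a).im ≠ 0 := by simpa using hz.ne'
  have hcirc : 2 * normSq (z - a) = b ^ 2 := by
    rw [im_conj_hxz_mul_htz hw hw2] at hI
    simpa [hz.ne', hw, sub_eq_zero] using hI
  rw [im_hx_mul_htz_sub_im_ht_mul_hxz_of_circle hw hw2 hcirc] at hD
  set c := z - a + 2 * starRingEnd ℂ (z - a)
  have hζ0 : z - a ≠ 0 := fun h => hζ (by rw [h, zero_im])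
  have hcw : (c * w).im = 0 := by
    rcases mul_eq_zero.1 hD with h | h
    · simp [hζ0, hw] at h
    · exact_mod_cast h
  apply mul_add_two_conj_pow_three_ne_sq hζ (c * w).re
  calc (z - a) * c ^ 3 = (c * w) ^ 2 := by
        rw [mul_pow, sq_eq_mul_add_two_conj_of_circle hw2 hcirc]; ring
    _ = ((c * w).re : ℂ) ^ 2 := by
        conv_lhs => rw [← re_add_im (c * w), hcw]
        simp

/-- Genus-zero case of part A of Theorem 4.6 of the paper: for `Im z > 0`, `b > 0`, the
quantities `Im(conj(h_{xz})·h_{tz})` and `Im(h_x)·h_{tz} − Im(h_t)·h_{xz}` do not both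
vanish (equivalently, the 3×2 matrix with rows `(Re h_{xz}, Re h_{tz})`,
`(Im h_{xz}, Im h_{tz})`, `(Im h_x, Im h_t)` has rank 2). -/
theorem genus_zero_rank_two (a b : ℝ) (hb : 0 < b) (z w : ℂ) (hz : 0 < z.im)
    (hw : w ≠ 0) (hw2 : w ^ 2 = (z - (a + b * I)) * (z - (starRingEnd ℂ) (a + b * I))) :
    ¬ ((((starRingEnd ℂ) (-(z - (a : ℂ)) / w)) *
          (-2 * (z ^ 2 - (a : ℂ) ^ 2) / w - 2 * w)).im = 0 ∧
       (((-w).im : ℂ)) * (-2 * (z ^ 2 - (a : ℂ) ^ 2) / w - 2 * w) -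
          (((-2 * (z + (a : ℂ)) * w).im : ℂ)) * (-(z - (a : ℂ)) / w) = 0) :=
  genus_zero_rank_two_general a b z w hz hw hw2
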